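/- arXiv:1411.3279 — 6 statements merged into one kernel-verified Lean document; each statement's English description precedes it below -/
import Mathlib

section
/- Let D be a cocomplete category and let X : ℕ ⥤ D be a countable sequence X_0 ⟶ X_1 ⟶ X_2 ⟶ ⋯ such that for every n the transition morphism X_n ⟶ X_{n+1} is a coprojection. Then the canonical morphism X_0 ⟶ colim_{n} X_n (the transfinite composition of the sequence, i.e. the colimit structure morphism at 0) is a coprojection. -/
open CategoryTheory CategoryTheory.Limits

/-!
Choose splittings `X (n+1) ≅ X n ⨿ Y n` under which the transition maps become `coprod.inl`.
Unwinding them recursively maps every `X n` into `X 0 ⨿ ∐ Y`, sending the new summand `Y n` to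
the `n`-th component of `∐ Y`; these maps form a colimit cocone, because a cocone under `X` is
determined by its leg at `0` together with its restrictions to the summands `Y n`. So
`colim X ≅ X 0 ⨿ ∐ Y` with `X 0` included as `coprod.inl`.
-/

/-- A morphism `f : A ⟶ X` in a category `D` with (binary) coproducts is a *coprojection*
if there exist an object `Y` and an isomorphism, in the arrow category of `D`, between `f`
and the canonical coproduct inclusion `A ⟶ A ⨿ Y`. -/
def IsCoprojection {D : Type*} [Category D] [HasColimits D] {A X : D} (f : A ⟶ X) : Prop :=
  ∃ Y : D, Nonempty (Arrow.mk f ≅ Arrow.mk (coprod.inl : A ⟶ A ⨿ Y))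

theorem isCoprojection_iff_exists_iso {D : Type*} [Category D] [HasColimits D] {A X : D}
    (f : A ⟶ X) :
    IsCoprojection f ↔ ∃ (Y : D) (e : X ≅ A ⨿ Y), f ≫ e.hom = coprod.inl := by
  constructor
  · rintro ⟨Y, ⟨E⟩⟩
    have hw : f ≫ E.hom.right = E.hom.left ≫ coprod.inl := E.hom.w.symm
    refine ⟨Y, ⟨E.hom.right ≫ coprod.map E.inv.left (𝟙 Y),
      coprod.map E.hom.left (𝟙 Y) ≫ E.inv.right, ?_, ?_⟩, ?_⟩ <;> simp [reassoc_of% hw]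
  · rintro ⟨Y, e, he⟩
    exact ⟨Y, ⟨Arrow.isoMk (Iso.refl A) e (by simpa using he.symm)⟩⟩

noncomputable section SequenceOfCoprojections

variable {D : Type*} [Category D] [HasBinaryCoproducts D] {X : ℕ ⥤ D} {Y : ℕ → D}
  [HasCoproduct Y] (e : ∀ n, X.obj (n + 1) ≅ X.obj n ⨿ Y n)

def toCoprodSigma : ∀ n, X.obj n ⟶ X.obj 0 ⨿ ∐ Y
  | 0 => coprod.inl
  | n + 1 => (e n).hom ≫ coprod.desc (toCoprodSigma n) (Sigma.ι Y n ≫ coprod.inr)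

def descCoprodSigma (s : Cocone X) : X.obj 0 ⨿ ∐ Y ⟶ s.pt :=
  coprod.desc (s.ι.app 0) (Sigma.desc fun n => coprod.inr ≫ (e n).inv ≫ s.ι.app (n + 1))

theorem inr_comp_inv_comp_toCoprodSigma (n : ℕ) :
    coprod.inr ≫ (e n).inv ≫ toCoprodSigma e (n + 1) = Sigma.ι Y n ≫ coprod.inr := by
  simp [toCoprodSigma, coprod.inr_desc]

theorem coprodSigma_hom_ext {Z : D} {f g : X.obj 0 ⨿ ∐ Y ⟶ Z}
    (h : ∀ n, toCoprodSigma e n ≫ f = toCoprodSigma e n ≫ g) : f = g := by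
  refine coprod.hom_ext (h 0) (Sigma.hom_ext _ _ fun n => ?_)
  simp only [← reassoc_of% inr_comp_inv_comp_toCoprodSigma e n, h (n + 1)]

variable {e}

theorem map_le_succ_comp_toCoprodSigma
    (he : ∀ n, X.map (homOfLE n.le_succ) ≫ (e n).hom = coprod.inl) (n : ℕ) :
    X.map (homOfLE n.le_succ) ≫ toCoprodSigma e (n + 1) = toCoprodSigma e n := by
  simp [toCoprodSigma, reassoc_of% he n, coprod.inl_desc]

theorem toCoprodSigma_comp_descCoprodSigma
    (he : ∀ n, X.map (homOfLE n.le_succ) ≫ (e n).hom = coprod.inl)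
    (s : Cocone X) (n : ℕ) :
    toCoprodSigma e n ≫ descCoprodSigma e s = s.ι.app n := by
  induction n with
  | zero => exact coprod.inl_desc _ _
  | succ n ih =>
    rw [← cancel_epi (e n).inv]
    refine coprod.hom_ext ?_ ?_
    · have hinl : coprod.inl ≫ (e n).inv = X.map (homOfLE n.le_succ) :=
        (Iso.comp_inv_eq _).mpr (he n).symm
      simp only [reassoc_of% hinl, reassoc_of% map_le_succ_comp_toCoprodSigma he n, ih, Cocone.w]
    · simp [reassoc_of% inr_comp_inv_comp_toCoprodSigma e n, descCoprodSigma, coprod.inr_desc]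

def coprodSigmaCocone (he : ∀ n, X.map (homOfLE n.le_succ) ≫ (e n).hom = coprod.inl) :
    Cocone X where
  pt := X.obj 0 ⨿ ∐ Y
  ι := NatTrans.ofSequence (toCoprodSigma e) fun n => by
    simpa using map_le_succ_comp_toCoprodSigma he n

def isColimitCoprodSigmaCocone (he : ∀ n, X.map (homOfLE n.le_succ) ≫ (e n).hom = coprod.inl) :
    IsColimit (coprodSigmaCocone he) where
  desc := descCoprodSigma e
  fac := toCoprodSigma_comp_descCoprodSigma he
  uniq s _ hm := coprodSigma_hom_ext e fun n =>
    (hm n).trans (toCoprodSigma_comp_descCoprodSigma he s n).symm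

end SequenceOfCoprojections

/-- In a cocomplete category, the class of coprojections is closed under countable
transfinite compositions: if `X : ℕ ⥤ D` is a sequence `X 0 ⟶ X 1 ⟶ ⋯` all of whose
transition morphisms `X n ⟶ X (n+1)` are coprojections, then the canonical morphism
`X 0 ⟶ colim X` is a coprojection. -/
theorem isCoprojection_transfiniteComposition {D : Type*} [Category D] [HasColimits D]
    (X : ℕ ⥤ D) (hX : ∀ n : ℕ, IsCoprojection (X.map (homOfLE (Nat.le_succ n)))) :
    IsCoprojection (colimit.ι X 0) := by
  choose Y e he using fun n => (isCoprojection_iff_exists_iso _).mp (hX n)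
  let hc := isColimitCoprodSigmaCocone he
  exact (isCoprojection_iff_exists_iso _).mpr ⟨∐ Y,
    (colimit.isColimit X).coconePointUniqueUpToIso hc,
    (colimit.isColimit X).comp_coconePointUniqueUpToIso_hom hc 0⟩
end

section
/- Let J be a category with finite coproducts and finite products, and let n ≥ 1. Then the diagonal functor Δ : J ⥤ ∏_{i : Fin n} J into the n-fold product category, sending an object B to the constant tuple (B, …, B), is a final (cofinal) functor: for every object A = (A_1, …, A_n) of the product category, the comma category (A ↓ Δ) is nonempty and connected. -/
/-!
The diagonal functor `J ⥤ (ι → J)` is right adjoint to the coproduct functor `A ↦ ∐ A`, and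
right adjoints are final: the comma category `(A ↓ Δ)` has the initial object
`A ⟶ Δ (∐ A)` given by the coproduct injections.
-/

open CategoryTheory CategoryTheory.Limits

namespace CategoryTheory.Limits

variable (ι : Type*) {J : Type*} [Category J] [HasCoproductsOfShape ι J]

noncomputable def Sigma.functorAdjunction :
    Sigma.functor ι ⊣ Functor.pi' (fun _ : ι => 𝟭 J) :=
  Adjunction.mkOfHomEquiv
    { homEquiv := fun A B =>
        { toFun := fun f i => Sigma.ι A i ≫ f
          invFun := fun g => Sigma.desc g
          left_inv := fun f => Sigma.hom_ext _ _ fun i => Sigma.ι_desc _ i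
          right_inv := fun g => funext fun i => Sigma.ι_desc g i }
      homEquiv_naturality_left_symm := fun f g => Sigma.hom_ext _ _ fun i => by
        change Sigma.ι _ i ≫ Sigma.desc (f ≫ g) = Sigma.ι _ i ≫ Sigma.map f ≫ Sigma.desc g
        rw [Sigma.ι_desc, Sigma.ι_map_assoc]
        exact (f i ≫= Sigma.ι_desc g i).symm
      homEquiv_naturality_right := fun f g => funext fun i => (Category.assoc _ _ _).symm }

end CategoryTheory.Limits

theorem diagonal_functor_final_general {J : Type*} [Category J]
    [HasFiniteCoproducts J] (n : ℕ) :
    (Functor.pi' (fun _ : Fin n => 𝟭 J)).Final :=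
  Functor.final_of_adjunction (Sigma.functorAdjunction (Fin n))

/-- Let `J` be a category with finite coproducts and finite products, and `n ≥ 1`.
Then the diagonal functor `J ⥤ ∏_{i : Fin n} J` into the `n`-fold product category,
sending an object `B` to the constant tuple `(B, …, B)`, is a final (cofinal) functor. -/
theorem diagonal_functor_final {J : Type*} [Category J]
    [HasFiniteCoproducts J] [HasFiniteProducts J] (n : ℕ) (hn : 1 ≤ n) :
    (Functor.pi' (fun _ : Fin n => 𝟭 J)).Final :=
  diagonal_functor_final_general n
end

section
/- Künneth rule for symmetric powers of types: for every natural number n and all types α and β, there is an equivalence Sym^n(α ⊕ β) ≃ Σ_{(i,j) : i + j = n} (Sym^i α × Sym^j β); concretely, Sym (α ⊕ β) n is equivalent to the sigma type over i ∈ {0, …, n} of Sym α i × Sym β (n − i). -/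
private def msplit {α β : Type*} (m : Multiset (α ⊕ β)) : Multiset α × Multiset β :=
  (m.filterMap Sum.getLeft?, m.filterMap Sum.getRight?)

private def mjoin {α β : Type*} (p : Multiset α × Multiset β) : Multiset (α ⊕ β) :=
  p.1.map Sum.inl + p.2.map Sum.inr

private theorem mjoin_msplit {α β : Type*} (m : Multiset (α ⊕ β)) : mjoin (msplit m) = m := by
  induction m using Multiset.induction_on with
  | empty => simp [msplit, mjoin]
  | cons a m ih =>
    rcases a with a | b
    · simp only [msplit, mjoin] at ih ⊢
      rw [Multiset.filterMap_cons_some Sum.getLeft? (Sum.inl a) _ rfl,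
        Multiset.filterMap_cons_none (f := Sum.getRight?) (Sum.inl a) _ rfl, Multiset.map_cons, Multiset.cons_add, ih]
    · simp only [msplit, mjoin] at ih ⊢
      rw [Multiset.filterMap_cons_none (f := Sum.getLeft?) (Sum.inr b) _ rfl,
        Multiset.filterMap_cons_some Sum.getRight? (Sum.inr b) _ rfl, Multiset.map_cons,
        add_comm, Multiset.cons_add, add_comm, ih]

private theorem fL_add {α β : Type*} (s : Multiset α) (m : Multiset (α ⊕ β)) :
    (s.map Sum.inl + m).filterMap Sum.getLeft? = s + m.filterMap Sum.getLeft? := by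
  induction s using Multiset.induction_on with
  | empty => simp
  | cons a s ih =>
    rw [Multiset.map_cons, Multiset.cons_add,
      Multiset.filterMap_cons_some Sum.getLeft? (Sum.inl a) _ rfl, ih, Multiset.cons_add]

private theorem fL_inr {α β : Type*} (t : Multiset β) :
    (t.map Sum.inr).filterMap (Sum.getLeft? (α := α)) = 0 := by
  induction t using Multiset.induction_on with
  | empty => simp
  | cons b t ih =>
    rw [Multiset.map_cons, Multiset.filterMap_cons_none (f := Sum.getLeft?) (Sum.inr b) _ rfl, ih]

private theorem fR_add {α β : Type*} (t : Multiset β) (m : Multiset (α ⊕ β)) :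
    (t.map Sum.inr + m).filterMap Sum.getRight? = t + m.filterMap Sum.getRight? := by
  induction t using Multiset.induction_on with
  | empty => simp
  | cons b t ih =>
    rw [Multiset.map_cons, Multiset.cons_add,
      Multiset.filterMap_cons_some Sum.getRight? (Sum.inr b) _ rfl, ih, Multiset.cons_add]

private theorem fR_inl {α β : Type*} (s : Multiset α) :
    (s.map Sum.inl).filterMap (Sum.getRight? (β := β)) = 0 := by
  induction s using Multiset.induction_on with
  | empty => simp
  | cons a s ih =>
    rw [Multiset.map_cons, Multiset.filterMap_cons_none (f := Sum.getRight?) (Sum.inl a) _ rfl, ih]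

private theorem msplit_mjoin {α β : Type*} (p : Multiset α × Multiset β) :
    msplit (mjoin p) = p := by
  obtain ⟨s, t⟩ := p
  simp only [msplit, mjoin]
  rw [fL_add, fL_inr, add_zero, add_comm (s.map Sum.inl), fR_add, fR_inl, add_zero]

private theorem card_mjoin {α β : Type*} (p : Multiset α × Multiset β) :
    Multiset.card (mjoin p) = Multiset.card p.1 + Multiset.card p.2 := by
  simp [mjoin]

/-- Künneth rule for symmetric powers of types: for every `n : ℕ` and types `α`, `β`,
the `n`-th symmetric power of `α ⊕ β` is equivalent to the sigma type, over the pairs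
`(i, j)` of natural numbers with `i + j = n`, of the products `Sym α i × Sym β j`. -/
theorem sym_sum_equiv_sigma (n : ℕ) (α β : Type*) :
    Nonempty (Sym (α ⊕ β) n ≃ Σ p : {p : ℕ × ℕ // p.1 + p.2 = n}, Sym α p.1.1 × Sym β p.1.2) := by
  constructor
  refine Equiv.symm (Equiv.ofBijective
    (fun x => (⟨mjoin (x.2.1.1, x.2.2.1), by
      rw [card_mjoin]; simp [x.2.1.2, x.2.2.2, x.1.2]⟩ : Sym (α ⊕ β) n)) ⟨?_, ?_⟩)
  · rintro ⟨⟨⟨i, j⟩, hij⟩, ⟨s, hs⟩, ⟨t, ht⟩⟩ ⟨⟨⟨i', j'⟩, hij'⟩, ⟨s', hs'⟩, ⟨t', ht'⟩⟩ hxy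
    simp only at hs ht hs' ht'
    have hm : mjoin (s, t) = mjoin (s', t') := congrArg Subtype.val hxy
    have hst := congrArg msplit hm
    rw [msplit_mjoin, msplit_mjoin] at hst
    have hs2 : s = s' := congrArg Prod.fst hst
    have ht2 : t = t' := congrArg Prod.snd hst
    subst hs2; subst ht2
    subst hij; subst hs; subst ht; subst hs'; subst ht'
    rfl
  · intro m
    refine ⟨⟨⟨(Multiset.card (msplit m.1).1, Multiset.card (msplit m.1).2), ?_⟩,
      (⟨(msplit m.1).1, rfl⟩, ⟨(msplit m.1).2, rfl⟩)⟩, Subtype.ext (mjoin_msplit m.1)⟩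
    have hc := card_mjoin (msplit m.1)
    rw [mjoin_msplit] at hc
    simpa [m.2] using hc.symm
end

section
/- Let C be a preadditive category which is ℚ-linear, let n ≥ 1, and let A, B, B′ be objects of C. Suppose given: an epimorphism ϱ : A ⟶ B, an epimorphism p : A ⟶ B′, a morphism u : B ⟶ B′ with ϱ ≫ u = p, and a morphism t : B′ ⟶ A (a transfer for p) satisfying t ≫ p = (n! : ℚ) • 𝟙_{B′} and p ≫ (t ≫ ϱ) = (n! : ℚ) • ϱ. Then u is an isomorphism. -/
open CategoryTheory

/-- Let `C` be a `ℚ`-linear preadditive category, `n ≥ 1`, and `A, B, B'` objects of `C`.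
Given an epimorphism `ϱ : A ⟶ B`, an epimorphism `p : A ⟶ B'`, a morphism `u : B ⟶ B'`
with `ϱ ≫ u = p`, and a transfer `t : B' ⟶ A` for `p` satisfying `t ≫ p = n! • 𝟙 B'` and
`p ≫ (t ≫ ϱ) = n! • ϱ`, the morphism `u` is an isomorphism. -/
theorem isIso_of_transfer {C : Type*} [Category C] [Preadditive C] [Linear ℚ C]
    (n : ℕ) (hn : 1 ≤ n) {A B B' : C}
    (ϱ : A ⟶ B) (p : A ⟶ B') (u : B ⟶ B') (t : B' ⟶ A)
    [Epi ϱ] [Epi p]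
    (hu : ϱ ≫ u = p)
    (ht₁ : t ≫ p = (n.factorial : ℚ) • 𝟙 B')
    (ht₂ : p ≫ (t ≫ ϱ) = (n.factorial : ℚ) • ϱ) :
    IsIso u := by
  have hfac : ((n.factorial : ℚ)) ≠ 0 := by
    exact_mod_cast Nat.factorial_ne_zero n
  refine ⟨((n.factorial : ℚ)⁻¹ • (t ≫ ϱ)), ?_, ?_⟩
  · rw [← cancel_epi ϱ]
    rw [← Category.assoc, hu, Linear.comp_smul, ← Category.assoc, Category.assoc, ht₂,
      smul_smul, inv_mul_cancel₀ hfac, one_smul, Category.comp_id]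
  · rw [Linear.smul_comp, Category.assoc, hu, ht₁, smul_smul, inv_mul_cancel₀ hfac, one_smul]
end

section
/- Let k be a field and L a finite Galois field extension of k of degree r, and let n ≥ 1 be an integer. Then the n-fold tensor power L^{⊗_k n} = ⨂_{i : Fin n} L is isomorphic, as a k-algebra, to the product of r^{n−1} copies of L, i.e. there exists a k-algebra isomorphism L^{⊗_k n} ≅ (Fin (r^{n−1}) → L). -/
open scoped TensorProduct

set_option synthInstance.maxHeartbeats 1000000
set_option maxHeartbeats 1000000

/-!
For a finite separable extension `L/k` and a field `K` in which `L` splits, the map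
`K ⊗[k] L → ((L →ₐ[k] K) → K)`, `x ⊗ y ↦ (σ ↦ x * σ y)`, is `K`-linear between spaces of the same
dimension `[L : k]`, and it is surjective: a functional vanishing on its image is a `K`-linear
relation among the embeddings `σ`, which Dedekind's lemma forbids. Taking `K = L` Galois gives
`L ⊗[k] L ≃ L^r`. Peeling one factor off the tensor power,
`L^{⊗(m+2)} ≃ L^{⊗(m+1)} ⊗ L ≃ L^{r^m} ⊗ L ≃ (L ⊗ L)^{r^m} ≃ L^{r^(m+1)}`.
-/

namespace PiTensorProduct

variable {R ι B : Type*} {A : ι → Type*} [CommSemiring R] [∀ i, Semiring (A i)]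
  [∀ i, Algebra R (A i)] [Semiring B] [Algebra R B]

def algEquivOfLinearEquiv (e : (⨂[R] i, A i) ≃ₗ[R] B) (one : e (tprod R 1) = 1)
    (mul : ∀ x y, e (tprod R (x * y)) = e (tprod R x) * e (tprod R y)) :
    (⨂[R] i, A i) ≃ₐ[R] B :=
  AlgEquiv.ofLinearEquiv e one fun x y => by
    let f := liftAlgHom (e.toLinearMap.compMultilinearMap (tprod R)) (by simpa) (by simpa)
    have hfe : f.toLinearMap = e.toLinearMap :=
      PiTensorProduct.ext <| MultilinearMap.ext fun _ => by simp [f]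
    have hf (z) : f z = e z := LinearMap.congr_fun hfe z
    rw [← hf, ← hf, ← hf, map_mul]

def subsingletonAlgEquiv [Subsingleton ι] (i₀ : ι) : (⨂[R] i, A i) ≃ₐ[R] A i₀ :=
  algEquivOfLinearEquiv (subsingletonEquiv i₀) (by simp) (by simp)

variable (R) (C : Type*) [Semiring C] [Algebra R C]

def finSuccAlgEquiv (n : ℕ) : (⨂[R] _ : Fin (n + 1), C) ≃ₐ[R] (⨂[R] _ : Fin n, C) ⊗[R] C :=
  algEquivOfLinearEquiv
    ((reindex R (fun _ => C) finSumFinEquiv.symm).trans <| (tmulEquiv R C).symm.trans <|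
      TensorProduct.congr (LinearEquiv.refl R _) (subsingletonEquiv 0))
    (by simp [← Pi.one_def, one_def, Algebra.TensorProduct.one_def])
    (fun x y => by simp [Pi.mul_def])

end PiTensorProduct

def AlgEquiv.curry (R ι κ A : Type*) [CommSemiring R] [Semiring A] [Algebra R A] :
    (ι × κ → A) ≃ₐ[R] (ι → κ → A) where
  __ := Equiv.curry ι κ A
  map_mul' _ _ := rfl
  map_add' _ _ := rfl
  commutes' _ := rfl

namespace Algebra.TensorProduct

variable (k K L : Type*) [Field k] [Field K] [Field L] [Algebra k K] [Algebra k L]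

noncomputable def toPiAlgHom : K ⊗[k] L →ₐ[K] ((L →ₐ[k] K) → K) :=
  lift (Algebra.ofId K _) (AlgHom.pi fun σ => σ) fun _ _ => .all _ _

variable {k K L}

@[simp]
lemma toPiAlgHom_tmul (x : K) (y : L) : toPiAlgHom k K L (x ⊗ₜ y) = fun σ => x * σ y := by
  ext σ
  simp [toPiAlgHom]

variable [FiniteDimensional k L]

lemma toPiAlgHom_surjective : Function.Surjective (toPiAlgHom k K L) := by
  classical
  change Function.Surjective (toPiAlgHom k K L).toLinearMap
  rw [← LinearMap.dualMap_injective_iff, injective_iff_map_eq_zero]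
  intro f hf
  have hrel : ∑ σ : L →ₐ[k] K, (f fun τ => if σ = τ then 1 else 0) • σ.toLinearMap = 0 := by
    ext y
    have hy := LinearMap.congr_fun hf (1 ⊗ₜ y)
    rw [LinearMap.dualMap_apply, AlgHom.toLinearMap_apply, toPiAlgHom_tmul,
      LinearMap.pi_apply_eq_sum_univ f] at hy
    simpa [mul_comm] using hy
  have hzero := Fintype.linearIndependent_iff.1 (linearIndependent_algHom_toLinearMap k L K) _ hrel
  exact LinearMap.ext fun g => by simp [LinearMap.pi_apply_eq_sum_univ f g, hzero]

variable [Algebra.IsSeparable k L]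

lemma toPiAlgHom_bijective (hK : ∀ x : L, ((minpoly k x).map (algebraMap k K)).Splits) :
    Function.Bijective (toPiAlgHom k K L) := by
  have hrank : Module.finrank K (K ⊗[k] L) = Module.finrank K ((L →ₐ[k] K) → K) := by
    rw [Module.finrank_baseChange, Module.finrank_fintype_fun_eq_card,
      AlgHom.card_of_splits k L K hK]
  exact ⟨(LinearMap.injective_iff_surjective_of_finrank_eq_finrank hrank).2
    toPiAlgHom_surjective, toPiAlgHom_surjective⟩

variable (k K L) in
noncomputable def toPiAlgEquiv (hK : ∀ x : L, ((minpoly k x).map (algebraMap k K)).Splits) :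
    K ⊗[k] L ≃ₐ[K] ((L →ₐ[k] K) → K) :=
  .ofBijective _ (toPiAlgHom_bijective hK)

end Algebra.TensorProduct

theorem PiTensorProduct.nonempty_algEquiv_pi_of_tensorProduct_self {k L : Type*} [CommSemiring k]
    [CommSemiring L] [Algebra k L] {r : ℕ} (e : L ⊗[k] L ≃ₐ[k] (Fin r → L)) (m : ℕ) :
    Nonempty ((⨂[k] _ : Fin (m + 1), L) ≃ₐ[k] (Fin (r ^ m) → L)) := by
  induction m with
  | zero =>
    rw [zero_add, pow_zero]
    exact ⟨(subsingletonAlgEquiv 0).trans (AlgEquiv.funUnique k (Fin 1) L).symm⟩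
  | succ m ih =>
    obtain ⟨f⟩ := ih
    exact ⟨(finSuccAlgEquiv k L (m + 1)).trans <|
      (Algebra.TensorProduct.congr f AlgEquiv.refl).trans <|
      (Algebra.TensorProduct.comm k _ L).trans <|
      (Algebra.TensorProduct.piRight k k L fun _ => L).trans <|
      (AlgEquiv.piCongrRight fun _ => e).trans <|
      (AlgEquiv.curry k (Fin (r ^ m)) (Fin r) L).symm.trans <|
      AlgEquiv.piCongrLeft k (fun _ => L) finProdFinEquiv⟩

/-- Let `L/k` be a finite Galois field extension of degree `r` and let `n ≥ 1`. Then the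
`n`-fold tensor power `L^{⊗_k n} = ⨂[k] i : Fin n, L` is isomorphic, as a `k`-algebra, to
the product of `r^(n-1)` copies of `L`. -/
theorem piTensorPower_galois_iso_pi (k L : Type*) [Field k] [Field L] [Algebra k L]
    [IsGalois k L] [FiniteDimensional k L] (r : ℕ) (hr : Module.finrank k L = r)
    (n : ℕ) (hn : 1 ≤ n) :
    Nonempty ((⨂[k] _ : Fin n, L) ≃ₐ[k] (Fin (r ^ (n - 1)) → L)) := by
  obtain ⟨m, rfl⟩ := Nat.exists_eq_add_of_le' hn
  have hsplit : ∀ x : L, ((minpoly k x).map (algebraMap k L)).Splits :=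
    Normal.splits inferInstance
  have hcard : Nat.card (L →ₐ[k] L) = r := by
    rw [AlgHom.natCard_of_splits k L L hsplit, hr]
  exact PiTensorProduct.nonempty_algEquiv_pi_of_tensorProduct_self
    (((Algebra.TensorProduct.toPiAlgEquiv k L L hsplit).restrictScalars k).trans
      (AlgEquiv.piCongrLeft k (fun _ => L) (Finite.equivFinOfCardEq hcard))) m
end

section
/- Let k be a field, L a finite Galois field extension of k of degree r ≥ 1, and K an algebraically closed field containing L (so k ⊆ L ⊆ K compatibly). Then for every integer n ≥ 0, the set of k-algebra homomorphisms from the invariant subalgebra (L^{⊗_k n})^{Σ_n} to K is finite, with exactly C(r + n − 1, n) elements. -/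
open scoped TensorProduct
open PiTensorProduct

set_option synthInstance.maxHeartbeats 1000000
set_option maxHeartbeats 1000000

/-- For a commutative `k`-algebra `A` and a permutation `σ ∈ Σ_n`, the `k`-algebra
endomorphism of the `n`-fold tensor power `A^{⊗_k n} = ⨂[k] i : Fin n, A` permuting the
tensor factors along `σ`. -/
noncomputable def permAlgHom (k : Type*) [CommSemiring k] (A : Type*) [CommSemiring A]
    [Algebra k A] {n : ℕ} (σ : Equiv.Perm (Fin n)) :
    (⨂[k] _ : Fin n, A) →ₐ[k] (⨂[k] _ : Fin n, A) :=
  PiTensorProduct.liftAlgHom ((PiTensorProduct.tprod k).domDomCongr σ)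
    (by simp [PiTensorProduct.one_def]; rfl)
    (fun x y => by simp [MultilinearMap.domDomCongr_apply]; rfl)

/-- The subalgebra `(A^{⊗_k n})^{Σ_n}` of `Σ_n`-invariant elements of the `n`-fold tensor
power of a commutative `k`-algebra `A`. -/
noncomputable def symInvariants (k : Type*) [CommSemiring k] (A : Type*) [CommSemiring A]
    [Algebra k A] (n : ℕ) : Subalgebra k (⨂[k] _ : Fin n, A) :=
  ⨅ σ : Equiv.Perm (Fin n), AlgHom.equalizer (permAlgHom k A σ) (AlgHom.id k _)

/-!
A `k`-algebra map `L^{⊗n} → K` is an `n`-tuple of embeddings `L → K`, and there are `r` such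
embeddings because `L/k` is separable. As `L^{⊗n}` is integral over its invariants and `K` is
algebraically closed, every map from the invariants extends to `L^{⊗n}` (going up). Two tuples
restrict to the same map iff they differ by a permutation: for a primitive element `α`, the
polynomial `∏ᵢ (X - 1 ⊗ ⋯ ⊗ α ⊗ ⋯ ⊗ 1)` has invariant coefficients, so the restriction
determines the multiset of values at `α`, hence the multiset of embeddings. So maps from the
invariants to `K` are multisets of size `n` of `r` embeddings, of which there are
`C(r + n - 1, n)`.
-/

open Polynomial

lemma exists_perm_eq_comp_of_map_univ_val_eq {ι α : Type*} [Fintype ι] {f g : ι → α}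
    (h : Finset.univ.val.map f = Finset.univ.val.map g) : ∃ σ : Equiv.Perm ι, f = g ∘ σ := by
  classical
  have hcard : ∀ c, Fintype.card {i // f i = c} = Fintype.card {i // g i = c} := fun c => by
    simpa only [Fintype.card_subtype, Finset.card_def, Finset.filter_val, Multiset.count_map,
      eq_comm] using congrArg (Multiset.count c) h
  exact ⟨Equiv.ofFiberEquiv fun c => Fintype.equivOfCardEq (hcard c),
    funext fun i => (Equiv.ofFiberEquiv_map _ i).symm⟩

lemma Sym.exists_map_univ_val_eq {α : Type*} {n : ℕ} (s : Sym α n) :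
    ∃ f : Fin n → α, Finset.univ.val.map f = s := by
  have hl : (s : Multiset α).toList.length = n := by rw [Multiset.length_toList]; exact s.2
  refine ⟨fun i => (s : Multiset α).toList.get (i.cast hl.symm), ?_⟩
  rw [Fin.univ_val_map, ← List.ofFn_congr hl, List.ofFn_get, Multiset.coe_toList]

noncomputable def Equiv.ofSurjectiveOfEqIff {α β γ : Type*} {f : α → β} {g : α → γ}
    (hf : Function.Surjective f) (hg : Function.Surjective g)
    (h : ∀ a b, f a = f b ↔ g a = g b) : β ≃ γ :=
  (Setoid.quotientKerEquivOfSurjective f hf).symm.trans <|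
    (Quotient.congr (Equiv.refl α) h).trans (Setoid.quotientKerEquivOfSurjective g hg)

theorem RingHom.exists_comp_algebraMap_eq_of_isIntegral {R S K : Type*} [CommRing R] [CommRing S]
    [Field K] [IsAlgClosed K] [Algebra R S] [Algebra.IsIntegral R S] [FaithfulSMul R S]
    (χ : R →+* K) : ∃ φ : S →+* K, φ.comp (algebraMap R S) = χ := by
  have : (RingHom.ker χ).IsPrime := RingHom.ker_isPrime χ
  obtain ⟨⟨Q, _, _⟩⟩ := Ideal.nonempty_primesOver (RingHom.ker χ) (S := S)
  let : Algebra (R ⧸ RingHom.ker χ) K := (RingHom.kerLift χ).toAlgebra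
  have : FaithfulSMul (R ⧸ RingHom.ker χ) K :=
    (faithfulSMul_iff_algebraMap_injective _ _).mpr (RingHom.kerLift_injective χ)
  have : Module.IsTorsionFree (R ⧸ RingHom.ker χ) (S ⧸ Q) := FaithfulSMul.to_isTorsionFree _ _
  let g := IsAlgClosed.lift (R := R ⧸ RingHom.ker χ) (S := S ⧸ Q) (M := K)
  exact ⟨(g : S ⧸ Q →+* K).comp (Ideal.Quotient.mk Q),
    RingHom.ext fun x => g.commutes (Ideal.Quotient.mk _ x)⟩

theorem AlgHom.exists_comp_eq_of_isIntegral {k R S K : Type*} [CommRing k] [CommRing R]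
    [CommRing S] [Field K] [IsAlgClosed K] [Algebra k R] [Algebra k S] [Algebra k K]
    [Algebra R S] [IsScalarTower k R S] [Algebra.IsIntegral R S] [FaithfulSMul R S]
    (χ : R →ₐ[k] K) : ∃ φ : S →ₐ[k] K, φ.comp (IsScalarTower.toAlgHom k R S) = χ := by
  obtain ⟨φ, hφ⟩ := RingHom.exists_comp_algebraMap_eq_of_isIntegral (S := S) χ.toRingHom
  refine ⟨⟨φ, fun c => ?_⟩, AlgHom.coe_ringHom_injective hφ⟩
  show φ (algebraMap k S c) = _
  rw [IsScalarTower.algebraMap_apply k R S, ← RingHom.comp_apply, hφ]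
  exact χ.commutes c

namespace PiTensorProduct

section AlgHomEquivPi

variable {R ι B : Type*} [CommSemiring R] [Fintype ι] {A : ι → Type*}
  [∀ i, CommSemiring (A i)] [∀ i, Algebra R (A i)] [CommSemiring B] [Algebra R B]

noncomputable def algHomOfPi (f : (i : ι) → A i →ₐ[R] B) : (⨂[R] i, A i) →ₐ[R] B :=
  liftAlgHom ((MultilinearMap.mkPiAlgebra R ι B).compLinearMap fun i => (f i).toLinearMap)
    (by simp) (fun x y => by simp [Finset.prod_mul_distrib])

@[simp]
lemma algHomOfPi_tprod (f : (i : ι) → A i →ₐ[R] B) (a : (i : ι) → A i) :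
    algHomOfPi f (tprod R a) = ∏ i, f i (a i) :=
  lift.tprod a

variable [DecidableEq ι]

@[simp]
lemma algHomOfPi_singleAlgHom (f : (i : ι) → A i →ₐ[R] B) (i : ι) (a : A i) :
    algHomOfPi f (singleAlgHom i a) = f i a := by
  rw [singleAlgHom_apply, algHomOfPi_tprod, MonoidHom.mulSingle_apply]
  simp_rw [Pi.apply_mulSingle (fun j => f j) (fun j => map_one _) i a]
  exact Fintype.prod_pi_mulSingle' i (f i a)

noncomputable def algHomEquivPi : ((⨂[R] i, A i) →ₐ[R] B) ≃ ((i : ι) → A i →ₐ[R] B) where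
  toFun φ i := φ.comp (singleAlgHom i)
  invFun := algHomOfPi
  left_inv _ := algHom_ext fun i => AlgHom.ext fun a => algHomOfPi_singleAlgHom _ i a
  right_inv f := funext fun i => AlgHom.ext fun a => algHomOfPi_singleAlgHom f i a

end AlgHomEquivPi

end PiTensorProduct

section SymInvariants

variable {k A B : Type*} [CommSemiring k] [CommSemiring A] [Algebra k A] [CommSemiring B]
  [Algebra k B] {n : ℕ}

lemma permAlgHom_singleAlgHom (σ : Equiv.Perm (Fin n)) (i : Fin n) (a : A) :
    permAlgHom k A σ (singleAlgHom i a) = singleAlgHom (σ⁻¹ i) a := by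
  simp only [permAlgHom, singleAlgHom_apply, liftAlgHom_apply, lift.tprod,
    MultilinearMap.domDomCongr_apply, MonoidHom.mulSingle_apply]
  exact congrArg (PiTensorProduct.tprod k) (Pi.mulSingle_comp_equiv σ i a)

lemma mem_symInvariants {x : ⨂[k] _ : Fin n, A} :
    x ∈ symInvariants k A n ↔ ∀ σ : Equiv.Perm (Fin n), permAlgHom k A σ x = x := by
  simp [symInvariants, Algebra.mem_iInf, AlgHom.mem_equalizer]

lemma algHomOfPi_comp_perm (f : Fin n → (A →ₐ[k] B)) (σ : Equiv.Perm (Fin n)) :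
    algHomOfPi (f ∘ σ) = (algHomOfPi f).comp (permAlgHom k A σ⁻¹) :=
  algHom_ext fun i => AlgHom.ext fun a => by
    simp only [AlgHom.comp_apply, permAlgHom_singleAlgHom, algHomOfPi_singleAlgHom, inv_inv,
      Function.comp_apply]

noncomputable def liftSymInvariants (f : Fin n → (A →ₐ[k] B)) : symInvariants k A n →ₐ[k] B :=
  (algHomOfPi f).comp (symInvariants k A n).val

lemma liftSymInvariants_comp_perm (f : Fin n → (A →ₐ[k] B)) (σ : Equiv.Perm (Fin n)) :
    liftSymInvariants (f ∘ σ) = liftSymInvariants f := by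
  ext ⟨x, hx⟩
  simp [liftSymInvariants, algHomOfPi_comp_perm, mem_symInvariants.mp hx]

end SymInvariants

section Roots

variable {k A B : Type*} [CommRing k] [CommRing A] [Algebra k A] [CommRing B] [Algebra k B]
  {n : ℕ}

lemma exists_map_liftSymInvariants_eq_prod (a : A) :
    ∃ q : (symInvariants k A n)[X], ∀ f : Fin n → (A →ₐ[k] B),
      q.map (liftSymInvariants f : symInvariants k A n →+* B) = ∏ i, (X - C (f i a)) := by
  set p : (⨂[k] _ : Fin n, A)[X] := ∏ i, (X - C (singleAlgHom (A := fun _ => A) i a))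
  have hp (σ : Equiv.Perm (Fin n)) :
      p.map (permAlgHom k A σ : (⨂[k] _ : Fin n, A) →+* _) = p := by
    simp only [p, Polynomial.map_prod, Polynomial.map_sub, map_X, map_C, RingHom.coe_coe,
      permAlgHom_singleAlgHom]
    exact Equiv.prod_comp σ⁻¹ fun i => X - C (singleAlgHom (A := fun _ => A) i a)
  have hcoeff (m : ℕ) : p.coeff m ∈ symInvariants k A n := mem_symInvariants.mpr fun σ => by
    simpa only [coeff_map, RingHom.coe_coe] using congrArg (coeff · m) (hp σ)
  have hlifts : p ∈ Polynomial.lifts ((symInvariants k A n).val : symInvariants k A n →+* _) :=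
    (lifts_iff_coeff_lifts p).mpr fun m => ⟨⟨p.coeff m, hcoeff m⟩, rfl⟩
  obtain ⟨q, hq⟩ := (mem_lifts p).mp hlifts
  refine ⟨q, fun f => ?_⟩
  rw [liftSymInvariants, AlgHom.comp_toRingHom, ← Polynomial.map_map, hq]
  simp only [p, Polynomial.map_prod, Polynomial.map_sub, map_X, map_C, RingHom.coe_coe,
    algHomOfPi_singleAlgHom]

lemma map_univ_eq_of_liftSymInvariants_eq [IsDomain B] {f g : Fin n → (A →ₐ[k] B)}
    (h : liftSymInvariants f = liftSymInvariants g) (a : A) :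
    Finset.univ.val.map (fun i => f i a) = Finset.univ.val.map (fun i => g i a) := by
  obtain ⟨q, hq⟩ := exists_map_liftSymInvariants_eq_prod (k := k) (B := B) (n := n) a
  have hroots : ∀ f : Fin n → (A →ₐ[k] B),
      (q.map (liftSymInvariants f : symInvariants k A n →+* B)).roots =
        Finset.univ.val.map (fun i => f i a) := fun f => by
    rw [hq, Finset.prod_eq_multiset_prod]
    simpa only [Multiset.map_map, Function.comp_def] using
      roots_multiset_prod_X_sub_C (Finset.univ.val.map fun i => f i a)
  rw [← hroots f, ← hroots g, h]

end Roots

lemma liftSymInvariants_surjective {k A K : Type*} [CommRing k] [CommRing A] [Algebra k A]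
    [Module.Finite k A] [Field K] [IsAlgClosed K] [Algebra k K] {n : ℕ} :
    Function.Surjective (liftSymInvariants (k := k) (A := A) (B := K) (n := n)) := by
  intro χ
  have : Algebra.IsIntegral (symInvariants k A n) (⨂[k] _ : Fin n, A) :=
    Algebra.IsIntegral.tower_top k
  obtain ⟨φ, hφ⟩ := AlgHom.exists_comp_eq_of_isIntegral (S := ⨂[k] _ : Fin n, A) χ
  exact ⟨algHomEquivPi φ, (congrArg (fun ψ => ψ.comp (symInvariants k A n).val)
    (algHomEquivPi.symm_apply_apply φ)).trans hφ⟩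

section Separable

variable {k L K : Type*} [Field k] [Field L] [Algebra k L] [FiniteDimensional k L]
  [Algebra.IsSeparable k L] [CommRing K] [IsDomain K] [Algebra k K] {n : ℕ}

lemma liftSymInvariants_eq_iff {f g : Fin n → (L →ₐ[k] K)} :
    liftSymInvariants f = liftSymInvariants g ↔
      Finset.univ.val.map f = Finset.univ.val.map g := by
  constructor
  · intro h
    let pb := Field.powerBasisOfFiniteOfSeparable k L
    have hinj : Function.Injective fun φ : L →ₐ[k] K => φ pb.gen := fun _ _ h => pb.algHom_ext h
    apply Multiset.map_injective hinj
    simpa only [Multiset.map_map, Function.comp_def] using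
      map_univ_eq_of_liftSymInvariants_eq h pb.gen
  · intro h
    obtain ⟨σ, rfl⟩ := exists_perm_eq_comp_of_map_univ_val_eq h
    exact liftSymInvariants_comp_perm g σ

end Separable

noncomputable def algHomSymInvariantsEquivSym (k L K : Type*) [Field k] [Field L] [Algebra k L]
    [FiniteDimensional k L] [Algebra.IsSeparable k L] [Field K] [IsAlgClosed K] [Algebra k K]
    (n : ℕ) : (symInvariants k L n →ₐ[k] K) ≃ Sym (L →ₐ[k] K) n :=
  Equiv.ofSurjectiveOfEqIff
    (g := fun f : Fin n → (L →ₐ[k] K) => Sym.mk (Finset.univ.val.map f) (by simp))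
    liftSymInvariants_surjective (fun s => (Sym.exists_map_univ_val_eq s).imp fun _ => Subtype.ext)
    (fun _ _ => by rw [liftSymInvariants_eq_iff, ← Sym.coe_inj, Sym.coe_mk, Sym.coe_mk])

theorem finite_and_card_algHom_symInvariants_general (k L K : Type*) [Field k] [Field L]
    [Algebra k L] [IsGalois k L] [FiniteDimensional k L]
    [Field K] [IsAlgClosed K] [Algebra k K]
    (r : ℕ) (hr : Module.finrank k L = r) (n : ℕ) :
    Finite ((symInvariants k L n) →ₐ[k] K) ∧
      Nat.card ((symInvariants k L n) →ₐ[k] K) = (r + n - 1).choose n := by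
  classical
  let e := algHomSymInvariantsEquivSym k L K n
  refine ⟨Finite.of_equiv _ e.symm, ?_⟩
  rw [Nat.card_congr e, Nat.card_eq_fintype_card, Sym.card_sym_eq_choose, AlgHom.card, hr]

/-- Let `L/k` be a finite Galois field extension of degree `r ≥ 1` and `K` an algebraically
closed field containing `L` (compatibly with `k ⊆ L ⊆ K`). Then for every `n ≥ 0`, the set of
`k`-algebra homomorphisms `(L^{⊗_k n})^{Σ_n} → K` is finite with exactly `C(r + n - 1, n)`
elements. -/
theorem finite_and_card_algHom_symInvariants (k L K : Type*) [Field k] [Field L]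
    [Algebra k L] [IsGalois k L] [FiniteDimensional k L]
    [Field K] [IsAlgClosed K] [Algebra k K] [Algebra L K] [IsScalarTower k L K]
    (r : ℕ) (hr : Module.finrank k L = r) (hr1 : 1 ≤ r) (n : ℕ) :
    Finite ((symInvariants k L n) →ₐ[k] K) ∧
      Nat.card ((symInvariants k L n) →ₐ[k] K) = (r + n - 1).choose n :=
  finite_and_card_algHom_symInvariants_general k L K r hr n
end
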